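/- Let A be a finite-dimensional algebra over a field and f an idempotent such that the left A-module A/AfA has projective dimension at most 1. Then fA is projective as a left module over the algebra fAf. -/

import Mathlib

open CategoryTheory

noncomputable section

/-- Vanishing of the `n`-th Ext group of two `A`-modules. -/
def ExtVanish (A : Type) [Ring A] (n : ℕ) (X Y : ModuleCat.{0} A) : Prop :=
  Limits.IsZero (((Ext ℤ (ModuleCat.{0} A) n).obj (Opposite.op X)).obj Y)

/-- `M` belongs to `add X`: it is a direct summand of a finite direct sum of copies of `X`. -/
def InAdd (A : Type) [Ring A] (X M : ModuleCat.{0} A) : Prop :=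
  ∃ (n : ℕ) (i : M →ₗ[A] (Fin n → X)) (p : (Fin n → X) →ₗ[A] M),
    p.comp i = LinearMap.id

/-- `N` is a (first) syzygy of `M`: there is an exact sequence `0 → N → P → M → 0`
with `P` projective. -/
def IsSyzygyOf (A : Type) [Ring A] (N M : ModuleCat.{0} A) : Prop :=
  ∃ (P : ModuleCat.{0} A), Module.Projective A P ∧
    ∃ (ι : N →ₗ[A] P) (π : P →ₗ[A] M),
      Function.Injective ι ∧ Function.Surjective π ∧ Function.Exact ι π

/-- `N` is an `n`-th syzygy of `M`. -/
def IsNthSyzygyOf (A : Type) [Ring A] : ℕ → ModuleCat.{0} A → ModuleCat.{0} A → Prop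
  | 0, N, M => Nonempty (N ≅ M)
  | n + 1, N, M => ∃ K : ModuleCat.{0} A, IsSyzygyOf A K M ∧ IsNthSyzygyOf A n N K

/-- `N` is a (first) cosyzygy of `M`: there is an exact sequence `0 → M → I → N → 0`
with `I` injective. -/
def IsCosyzygyOf (A : Type) [Ring A] (N M : ModuleCat.{0} A) : Prop :=
  ∃ (I : ModuleCat.{0} A), Module.Injective A I ∧
    ∃ (ι : M →ₗ[A] I) (π : I →ₗ[A] N),
      Function.Injective ι ∧ Function.Surjective π ∧ Function.Exact ι π

/-- `N` is an `n`-th cosyzygy of `M`. -/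
def IsNthCosyzygyOf (A : Type) [Ring A] : ℕ → ModuleCat.{0} A → ModuleCat.{0} A → Prop
  | 0, N, M => Nonempty (N ≅ M)
  | n + 1, N, M => ∃ K : ModuleCat.{0} A, IsCosyzygyOf A K M ∧ IsNthCosyzygyOf A n N K

/-- The projective dimension of `M` is at most `n`. -/
def ProjDimLE (A : Type) [Ring A] (n : ℕ) (M : ModuleCat.{0} A) : Prop :=
  ∃ K : ModuleCat.{0} A, IsNthSyzygyOf A n K M ∧ Module.Projective A K

/-- The injective dimension of `M` is at most `n`. -/
def InjDimLE (A : Type) [Ring A] (n : ℕ) (M : ModuleCat.{0} A) : Prop :=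
  ∃ K : ModuleCat.{0} A, IsNthCosyzygyOf A n K M ∧ Module.Injective A K

/-- The underlying type of `D(A) = Hom_k(A, k)`. -/
def DualMod (k A : Type) [Field k] [Ring A] [Algebra k A] : Type := A →ₗ[k] k

instance (k A : Type) [Field k] [Ring A] [Algebra k A] : AddCommGroup (DualMod k A) :=
  inferInstanceAs (AddCommGroup (A →ₗ[k] k))

/-- Auxiliary scalar action for `DualMod`. -/
def dualSMul (k A : Type) [Field k] [Ring A] [Algebra k A] (a : A) (φ : A →ₗ[k] k) :
    A →ₗ[k] k := φ.comp (LinearMap.mulRight k a)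

/-- The left `A`-module structure on `D(A)`: `(a • φ) x = φ (x * a)`. -/
instance (k A : Type) [Field k] [Ring A] [Algebra k A] : Module A (DualMod k A) where
  smul a φ := dualSMul k A a φ
  one_smul φ := by
    show dualSMul k A 1 φ = φ
    unfold dualSMul; ext x; show DFunLike.coe (F := A →ₗ[k] k) φ (x * 1) = DFunLike.coe (F := A →ₗ[k] k) φ x; rw [mul_one]
  mul_smul a b φ := by
    show dualSMul k A (a * b) φ = dualSMul k A a (dualSMul k A b φ)
    unfold dualSMul; ext x; show DFunLike.coe (F := A →ₗ[k] k) φ (x * (a * b)) = DFunLike.coe (F := A →ₗ[k] k) φ (x * a * b); rw [mul_assoc]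
  smul_zero a := by
    show dualSMul k A a 0 = 0
    unfold dualSMul; ext x; simp
  smul_add a φ ψ := by
    show dualSMul k A a (φ + ψ) = dualSMul k A a φ + dualSMul k A a ψ
    unfold dualSMul; ext x; rfl
  add_smul a b φ := by
    show dualSMul k A (a + b) φ = dualSMul k A a φ + dualSMul k A b φ
    unfold dualSMul; ext x; show DFunLike.coe (F := A →ₗ[k] k) φ (x * (a + b)) = DFunLike.coe (F := A →ₗ[k] k) φ (x * a) + DFunLike.coe (F := A →ₗ[k] k) φ (x * b); rw [mul_add]; exact map_add (F := A →ₗ[k] k) φ (x * a) (x * b)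
  zero_smul φ := by
    show dualSMul k A 0 φ = 0
    unfold dualSMul; ext x; show DFunLike.coe (F := A →ₗ[k] k) φ (x * 0) = 0; rw [mul_zero]; exact map_zero (F := A →ₗ[k] k) φ

/-- `D(A)`, the dual of the right regular module, as an object of `ModuleCat A`. -/
def DualA (k A : Type) [Field k] [Ring A] [Algebra k A] : ModuleCat.{0} A :=
  ModuleCat.of A (DualMod k A)

/-- The idempotent ideal `⟨e⟩ = AeA`, as a left submodule of `A`. -/
def idemIdeal (A : Type) [Ring A] (e : A) : Submodule A A :=
  Submodule.span A (Set.range fun b : A => e * b)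

/-- The quotient `A/⟨e⟩` as a left `A`-module. -/
def quotMod (A : Type) [Ring A] (e : A) : ModuleCat.{0} A :=
  ModuleCat.of A (A ⧸ idemIdeal A e)

/-- The left ideal `Ae = {x | x * e = x}` (for `e` idempotent), as a submodule of `A`. -/
def leftPart (A : Type) [Ring A] (e : A) : Submodule A A where
  carrier := {x | x * e = x}
  add_mem' := by intro a b ha hb; simp only [Set.mem_setOf_eq] at *; rw [add_mul, ha, hb]
  zero_mem' := by simp
  smul_mem' := by intro c x hx; simp only [Set.mem_setOf_eq, smul_eq_mul] at *;
                  rw [mul_assoc, hx]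

/-- `Ae` as an object of `ModuleCat A`. -/
def AeMod (A : Type) [Ring A] (e : A) : ModuleCat.{0} A :=
  ModuleCat.of A (leftPart A e)

/-- `M` is Gorenstein projective: `Ext^i_A(M, A) = 0` for all `i > 0`. -/
def IsGorensteinProjective (A : Type) [Ring A] (M : ModuleCat.{0} A) : Prop :=
  ∀ i : ℕ, 0 < i → ExtVanish A i M (ModuleCat.of A A)

/-- `M` is Gorenstein injective: `Ext^i_A(D(A), M) = 0` for all `i > 0`. -/
def IsGorensteinInjective (k A : Type) [Field k] [Ring A] [Algebra k A]
    (M : ModuleCat.{0} A) : Prop :=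
  ∀ i : ℕ, 0 < i → ExtVanish A i (DualA k A) M

/-- `M ∈ gen_l(Ae)`: `M` has a projective resolution whose terms in degrees `≤ l`
lie in `add (Ae)`. -/
def GenLE (A : Type) [Ring A] (e : A) (l : ℕ) (M : ModuleCat.{0} A) : Prop :=
  ∃ (P : ℕ → ModuleCat.{0} A) (d : ∀ n : ℕ, (P (n + 1) →ₗ[A] P n)) (π : P 0 →ₗ[A] M),
    (∀ n, Module.Projective A (P n)) ∧
    Function.Surjective π ∧
    Function.Exact (d 0) π ∧
    (∀ n, Function.Exact (d (n + 1)) (d n)) ∧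
    (∀ n ≤ l, InAdd A (AeMod A e) (P n))


section Corner
variable (A : Type) [Ring A] (f : A)

/-- The additive subgroup `fAf = {x | f * x * f = x}` of `A`. -/
def cornerAddSubgroup : AddSubgroup A where
  carrier := {x | f * x * f = x}
  add_mem' := by
    intro a b ha hb
    simp only [Set.mem_setOf_eq] at *
    rw [mul_add, add_mul, ha, hb]
  zero_mem' := by simp
  neg_mem' := by
    intro a ha
    simp only [Set.mem_setOf_eq] at *
    rw [mul_neg, neg_mul, ha]

/-- The corner algebra `fAf`, as a type. -/
def Corner : Type := ↥(cornerAddSubgroup A f)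

instance : AddCommGroup (Corner A f) :=
  inferInstanceAs (AddCommGroup (cornerAddSubgroup A f))

variable {A f}

theorem Corner.mem_eq (x : Corner A f) : f * x.1 * f = x.1 := x.2

theorem Corner.left_absorb (hf : IsIdempotentElem f) (x : Corner A f) :
    f * x.1 = x.1 := by
  conv_lhs => rw [← x.2]
  rw [← mul_assoc, ← mul_assoc, hf]
  exact x.2

theorem Corner.right_absorb (hf : IsIdempotentElem f) (x : Corner A f) :
    x.1 * f = x.1 := by
  conv_lhs => rw [← x.2]
  rw [mul_assoc, hf]
  exact x.2

variable (A f)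

/-- The ring structure (with unit `f`) on the corner `fAf` of an idempotent `f`. -/
def cornerRing (hf : IsIdempotentElem f) : Ring (Corner A f) :=
  { (inferInstance : AddCommGroup (Corner A f)) with
    mul := fun x y => ⟨x.1 * y.1, by
      show f * (x.1 * y.1) * f = x.1 * y.1
      rw [← mul_assoc f x.1 y.1, Corner.left_absorb hf x,
        mul_assoc x.1 y.1 f, Corner.right_absorb hf y]⟩
    one := ⟨f, by show f * f * f = f; rw [hf, hf]⟩
    mul_assoc := fun x y z => Subtype.ext (mul_assoc x.1 y.1 z.1)
    one_mul := fun x => Subtype.ext (Corner.left_absorb hf x)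
    mul_one := fun x => Subtype.ext (Corner.right_absorb hf x)
    left_distrib := fun x y z => Subtype.ext (mul_add x.1 y.1 z.1)
    right_distrib := fun x y z => Subtype.ext (add_mul x.1 y.1 z.1)
    zero_mul := fun x => Subtype.ext (zero_mul x.1)
    mul_zero := fun x => Subtype.ext (mul_zero x.1) }

/-- The additive subgroup `fA = {x | f * x = x}` of `A`. -/
def faAddSubgroup : AddSubgroup A where
  carrier := {x | f * x = x}
  add_mem' := by
    intro a b ha hb
    simp only [Set.mem_setOf_eq] at *
    rw [mul_add, ha, hb]
  zero_mem' := by simp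
  neg_mem' := by
    intro a ha
    simp only [Set.mem_setOf_eq] at *
    rw [mul_neg, ha]

/-- `fA`, as a type. -/
def FA : Type := ↥(faAddSubgroup A f)

instance : AddCommGroup (FA A f) := inferInstanceAs (AddCommGroup (faAddSubgroup A f))

/-- The left `fAf`-module structure on `fA`, by multiplication. -/
def faModule (hf : IsIdempotentElem f) :
    letI : Ring (Corner A f) := cornerRing A f hf
    Module (Corner A f) (FA A f) :=
  letI : Ring (Corner A f) := cornerRing A f hf
  { smul := fun c x => ⟨c.1 * x.1, by
      show f * (c.1 * x.1) = c.1 * x.1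
      rw [← mul_assoc, Corner.left_absorb hf c]⟩
    one_smul := fun x => Subtype.ext (x.2 : f * x.1 = x.1)
    mul_smul := fun c d x => Subtype.ext (mul_assoc c.1 d.1 x.1)
    smul_zero := fun c => Subtype.ext (mul_zero c.1)
    smul_add := fun c x y => Subtype.ext (mul_add c.1 x.1 y.1)
    add_smul := fun c d x => Subtype.ext (add_mul c.1 d.1 x.1)
    zero_smul := fun x => Subtype.ext (zero_mul x.1) }

end Corner

/-!
Since `A` is projective, `pd (A/AfA) ≤ 1` forces the ideal `AfA` to be a projective left
`A`-module. It is generated by the elements `f b` of `fA`, so the surjection `A^(A) → AfA`,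
`e_b ↦ f b`, has an `A`-linear section `σ`. For `x ∈ fA` we get
`x = f x = ∑ f σ(x)_b (f b) = ∑ (f σ(x)_b f) (f b)`, which exhibits `fA` as an `fAf`-direct
summand of the free module `(fAf)^(A)`.
-/

section ProjectiveDimension

variable {R : Type} [Ring R]

theorem shortExact_shortComplexOfCompEqZero {K P M : Type}
    [AddCommGroup K] [AddCommGroup P] [AddCommGroup M] [Module R K] [Module R P] [Module R M]
    {ι : K →ₗ[R] P} {π : P →ₗ[R] M}
    (hι : Function.Injective ι) (hπ : Function.Surjective π) (h : Function.Exact ι π) :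
    (ModuleCat.shortComplexOfCompEqZero ι π h.linearMap_comp_eq_zero).ShortExact :=
  ModuleCat.shortComplex_shortExact _ h hι hπ

theorem ProjDimLE.hasProjectiveDimensionLT {n : ℕ} {M : ModuleCat.{0} R}
    (h : ProjDimLE R n M) : HasProjectiveDimensionLT M (n + 1) := by
  induction n generalizing M with
  | zero =>
    obtain ⟨K, ⟨e⟩, hK⟩ := h
    rw [← projective_iff_hasProjectiveDimensionLT_one]
    exact Projective.of_iso e ((IsProjective.iff_projective K).mp hK)
  | succ n ih =>
    obtain ⟨K, ⟨K₁, ⟨P, hP, ι, π, hι, hπ, hexact⟩, hK₁⟩, hK⟩ := h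
    have : Projective P := (IsProjective.iff_projective P).mp hP
    exact (shortExact_shortComplexOfCompEqZero hι hπ hexact).hasProjectiveDimensionLT_X₃
      (n + 1) (ih ⟨K, hK₁, hK⟩) (hasProjectiveDimensionLT_of_ge _ 1 _ (by omega))

theorem projective_of_exact_of_hasProjectiveDimensionLT_two {K P M : Type}
    [AddCommGroup K] [AddCommGroup P] [AddCommGroup M]
    [Module R K] [Module R P] [Module R M] [Module.Projective R P] {ι : K →ₗ[R] P} {π : P →ₗ[R] M}
    (hι : Function.Injective ι) (hπ : Function.Surjective π) (h : Function.Exact ι π)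
    (hM : HasProjectiveDimensionLT (ModuleCat.of R M) 2) : Module.Projective R K := by
  rw [IsProjective.iff_projective (R := R) K, projective_iff_hasProjectiveDimensionLT_one]
  have : Projective (ModuleCat.of R P) := (IsProjective.iff_projective (R := R) P).mp inferInstance
  exact (shortExact_shortComplexOfCompEqZero hι hπ h).hasProjectiveDimensionLT_X₁ 1
    inferInstance hM

end ProjectiveDimension

section Corner

variable {A : Type} [Ring A] {f : A}

theorem mul_mem_idemIdeal (b : A) : f * b ∈ idemIdeal A f :=
  Submodule.subset_span ⟨b, rfl⟩

theorem exists_idemIdeal_section [Module.Projective A (idemIdeal A f)] :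
    ∃ σ : idemIdeal A f →ₗ[A] (A →₀ A), ∀ x, (σ x).sum (fun b a => a * (f * b)) = x := by
  let ψ : (A →₀ A) →ₗ[A] idemIdeal A f :=
    Finsupp.linearCombination A fun b => ⟨f * b, mul_mem_idemIdeal b⟩
  have hψ : ∀ c, (ψ c : A) = c.sum (fun b a => a * (f * b)) := by
    simp [ψ, Finsupp.linearCombination_apply, Finsupp.sum]
  have hψ_surj : Function.Surjective ψ := by
    rintro ⟨x, hx⟩
    obtain ⟨c, rfl⟩ := Finsupp.mem_span_range_iff_exists_finsupp.mp hx
    exact ⟨c, Subtype.ext (hψ c)⟩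
  obtain ⟨σ, hσ⟩ := Module.projective_lifting_property ψ LinearMap.id hψ_surj
  exact ⟨σ, fun x => by rw [← hψ]; exact congrArg Subtype.val (LinearMap.congr_fun hσ x)⟩

variable (f) in
def FA.toIdemIdeal : FA A f →+ idemIdeal A f where
  toFun x := ⟨x.1, by rw [← (x.2 : f * x.1 = x.1)]; exact mul_mem_idemIdeal x.1⟩
  map_zero' := rfl
  map_add' _ _ := rfl

def cornerProj (hf : IsIdempotentElem f) : A →+ Corner A f where
  toFun a := ⟨f * a * f, show f * (f * a * f) * f = f * a * f by
    rw [← mul_assoc, ← mul_assoc, hf, mul_assoc, hf]⟩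
  map_zero' := Subtype.ext (show f * 0 * f = 0 by simp)
  map_add' a b := Subtype.ext (show f * (a + b) * f = f * a * f + f * b * f by noncomm_ring)

theorem projective_FA_of_projective_idemIdeal (hf : IsIdempotentElem f)
    [Module.Projective A (idemIdeal A f)] :
    letI : Ring (Corner A f) := cornerRing A f hf
    letI : Module (Corner A f) (FA A f) := faModule A f hf
    Module.Projective (Corner A f) (FA A f) := by
  let : Ring (Corner A f) := cornerRing A f hf
  let : Module (Corner A f) (FA A f) := faModule A f hf
  obtain ⟨σ, hσ⟩ := exists_idemIdeal_section (f := f)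
  let toIdeal := FA.toIdemIdeal f
  let g : FA A f →ₗ[Corner A f] (A →₀ Corner A f) :=
    { (Finsupp.mapRange.addMonoidHom (cornerProj hf)).comp (σ.toAddMonoidHom.comp toIdeal) with
      map_smul' c x := by
        have hσc : σ (toIdeal (c • x)) = c.1 • σ (toIdeal x) := by rw [← map_smul]; rfl
        refine Finsupp.ext fun b => Subtype.ext ?_
        show f * σ (toIdeal (c • x)) b * f = c.1 * (f * σ (toIdeal x) b * f)
        rw [hσc, Finsupp.smul_apply, smul_eq_mul, ← mul_assoc f, Corner.left_absorb hf c]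
        nth_rewrite 1 [← Corner.right_absorb hf c]
        simp only [mul_assoc] }
  let t (b : A) : FA A f := ⟨f * b, show f * (f * b) = f * b by rw [← mul_assoc, hf]⟩
  refine Module.Projective.of_split g (Finsupp.linearCombination (Corner A f) t)
    (LinearMap.ext fun x => Subtype.ext ?_)
  let val : FA A f →+ A := (faAddSubgroup A f).subtype
  show val (((σ (toIdeal x)).mapRange (cornerProj hf) (map_zero _)).sum fun b c => c • t b) = x.1
  rw [map_finsuppSum, Finsupp.sum_mapRange_index (fun b => by rw [zero_smul, map_zero])]
  calc (σ (toIdeal x)).sum (fun b a => val (cornerProj hf a • t b))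
      = f * (σ (toIdeal x)).sum (fun b a => a * (f * b)) := by
        rw [Finsupp.mul_sum]
        refine Finsupp.sum_congr fun b _ => ?_
        show f * _ * f * (f * b) = _
        rw [mul_assoc _ f, ← mul_assoc f f, hf, mul_assoc]
    _ = x.1 := by rw [hσ]; exact x.2

end Corner

theorem stmt_4_general (A : Type) [Ring A]
    (f : A) (hf : IsIdempotentElem f)
    (hpd : ProjDimLE A 1 (quotMod A f)) :
    letI : Ring (Corner A f) := cornerRing A f hf
    letI : Module (Corner A f) (FA A f) := faModule A f hf
    Module.Projective (Corner A f) (FA A f) := by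
  have : Module.Projective A (idemIdeal A f) :=
    projective_of_exact_of_hasProjectiveDimensionLT_two Subtype.val_injective
      (idemIdeal A f).mkQ_surjective (LinearMap.exact_subtype_mkQ _)
      hpd.hasProjectiveDimensionLT
  exact projective_FA_of_projective_idemIdeal hf

/-- If `A/AfA` has projective dimension at most one as a left `A`-module,
then `fA` is projective as a left `fAf`-module. -/
theorem stmt_4 (k A : Type) [Field k] [Ring A] [Algebra k A] [FiniteDimensional k A]
    (f : A) (hf : IsIdempotentElem f)
    (hpd : ProjDimLE A 1 (quotMod A f)) :
    letI : Ring (Corner A f) := cornerRing A f hf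
    letI : Module (Corner A f) (FA A f) := faModule A f hf
    Module.Projective (Corner A f) (FA A f) :=
  stmt_4_general A f hf hpd

end
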